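/- arXiv:1607.01505 — 4 statements merged into one kernel-verified Lean document; each statement's English description precedes it below -/
import Mathlib

section
/- Let f ∈ C_0^∞(Ω) with f ≥ 0, let u be the weak solution of the mixed problem with right-hand side f which in addition satisfies u ≥ 0 a.e. in ℝ^N, and let ξ0 be the weak solution of the mixed problem with right-hand side f ≡ 1. Then there exists a constant c = c(N, s, Ω, Σ1, Σ2) > 0 such that u(x) ≥ c (∫_Ω f(y) ξ0(y) dy) ξ0(x) for a.e. x ∈ Ω. -/
open MeasureTheory Set

noncomputable section

set_option maxHeartbeats 2000000

/-- Euclidean space ℝ^N. -/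
abbrev Rn (N : ℕ) := EuclideanSpace ℝ (Fin N)

/-- The set Q := ℝ^{2N} \ ((ℝ^N \ Ω) × (ℝ^N \ Ω)). -/
def Qset (N : ℕ) (Ω : Set (Rn N)) : Set (Rn N × Rn N) :=
  Set.univ \ (Ωᶜ ×ˢ Ωᶜ)

/-- The kernel (u(x)-u(y))(v(x)-v(y))/|x-y|^{N+2s}. -/
def frKer (N : ℕ) (s : ℝ) (u v : Rn N → ℝ) (p : Rn N × Rn N) : ℝ :=
  (u p.1 - u p.2) * (v p.1 - v p.2) / ‖p.1 - p.2‖ ^ ((N : ℝ) + 2 * s)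

/-- Membership in the space E^s_{Σ₁}: measurable, vanishing a.e. on Σ₁,
with finite L²(Ω) norm and finite Gagliardo seminorm over Q. -/
def MemE (N : ℕ) (s : ℝ) (Ω S1 : Set (Rn N)) (u : Rn N → ℝ) : Prop :=
  Measurable u ∧ (∀ᵐ x : Rn N, x ∈ S1 → u x = 0) ∧
  IntegrableOn (fun x => (u x) ^ 2) Ω ∧
  IntegrableOn (frKer N s u u) (Qset N Ω)

/-- Weak solution of the mixed problem (-Δ)^s u = f in Ω, u = 0 in Σ₁, 𝒩_s u = 0 in Σ₂. -/
def IsWeakSolMixed (N : ℕ) (s aNs : ℝ) (Ω S1 : Set (Rn N)) (f u : Rn N → ℝ) : Prop :=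
  MemE N s Ω S1 u ∧ ∀ φ : Rn N → ℝ, MemE N s Ω S1 φ →
    (aNs / 2) * ∫ p in Qset N Ω, frKer N s u φ p = ∫ x in Ω, f x * φ x

/-- Pointwise identity `(a-b)(a⁺-b⁺) = (a⁺-b⁺)² + (a⁻b⁺ + a⁺b⁻)`. -/
lemma pos_identity (a b : ℝ) :
    (a - b) * (max a 0 - max b 0) =
      (max a 0 - max b 0) * (max a 0 - max b 0) +
        (max (-a) 0 * max b 0 + max a 0 * max (-b) 0) := by
  rcases le_total a 0 with ha | ha <;> rcases le_total b 0 with hb | hb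
  · rw [max_eq_right ha, max_eq_right hb, max_eq_left (neg_nonneg.2 ha),
      max_eq_left (neg_nonneg.2 hb)]; ring
  · rw [max_eq_right ha, max_eq_left hb, max_eq_left (neg_nonneg.2 ha),
      max_eq_right (neg_nonpos.2 hb)]; ring
  · rw [max_eq_left ha, max_eq_right hb, max_eq_right (neg_nonpos.2 ha),
      max_eq_left (neg_nonneg.2 hb)]; ring
  · rw [max_eq_left ha, max_eq_left hb, max_eq_right (neg_nonpos.2 ha),
      max_eq_right (neg_nonpos.2 hb)]; ring

lemma max_neg_mul_max (a : ℝ) : max (-a) 0 * max a 0 = 0 := by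
  rcases le_total a 0 with h | h
  · rw [max_eq_right h, mul_zero]
  · rw [max_eq_right (neg_nonpos.2 h), zero_mul]

lemma measurable_frKer {N : ℕ} {s : ℝ} {u v : Rn N → ℝ}
    (hu : Measurable u) (hv : Measurable v) (hexp : 0 ≤ (N : ℝ) + 2 * s) :
    Measurable (frKer N s u v) := by
  unfold frKer
  exact (((hu.comp measurable_fst).sub (hu.comp measurable_snd)).mul
    ((hv.comp measurable_fst).sub (hv.comp measurable_snd))).div
    (((continuous_fst.sub continuous_snd).norm.rpow_const
      (fun x => Or.inr hexp)).measurable)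

lemma frKer_self_nonneg {N : ℕ} {s : ℝ} (u : Rn N → ℝ) (p : Rn N × Rn N) :
    0 ≤ frKer N s u u p :=
  div_nonneg (mul_self_nonneg _) (Real.rpow_nonneg (norm_nonneg _) _)

lemma abs_frKer_le {N : ℕ} {s : ℝ} (u v : Rn N → ℝ) (p : Rn N × Rn N) :
    |frKer N s u v p| ≤ frKer N s u u p + frKer N s v v p := by
  unfold frKer
  rw [abs_div, abs_of_nonneg (Real.rpow_nonneg (norm_nonneg _) _), ← add_div]
  refine div_le_div_of_nonneg_right ?_ (Real.rpow_nonneg (norm_nonneg _) _)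
  set a := u p.1 - u p.2
  set b := v p.1 - v p.2
  have h1 := abs_mul_abs_self a
  have h2 := abs_mul_abs_self b
  have h3 := abs_mul a b
  nlinarith [sq_nonneg (|a| - |b|), abs_nonneg a, abs_nonneg b, abs_nonneg (a * b)]

/-- Mixed Gagliardo kernels are integrable on `Q` if the two diagonal ones are. -/
lemma integrableOn_frKer_mixed {N : ℕ} {s : ℝ} {Ω : Set (Rn N)} {u v : Rn N → ℝ}
    (hu : Measurable u) (hv : Measurable v) (hexp : 0 ≤ (N : ℝ) + 2 * s)
    (hIu : IntegrableOn (frKer N s u u) (Qset N Ω))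
    (hIv : IntegrableOn (frKer N s v v) (Qset N Ω)) :
    IntegrableOn (frKer N s u v) (Qset N Ω) := by
  refine (hIu.add hIv).mono' ((measurable_frKer hu hv hexp).aestronglyMeasurable)
    (ae_of_all _ fun p => ?_)
  rw [Real.norm_eq_abs]
  exact abs_frKer_le u v p

/-- An L² function on a finite-measure set is L¹ there. -/
lemma integrableOn_of_sq {N : ℕ} {Ω : Set (Rn N)} {u : Rn N → ℝ}
    (hm : Measurable u) (h2 : IntegrableOn (fun x => (u x) ^ 2) Ω)
    (hfin : volume Ω < ⊤) : IntegrableOn u Ω := by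
  refine (h2.add ((integrableOn_const_iff (C := (1:ℝ))).2 (Or.inr hfin))).mono'
    hm.aestronglyMeasurable (ae_of_all _ fun x => ?_)
  rw [Real.norm_eq_abs]
  simp only [Pi.add_apply]
  rcases abs_cases (u x) with ⟨h, _⟩ | ⟨h, _⟩ <;>
    nlinarith [sq_nonneg (u x - 1), sq_nonneg (u x + 1)]

/-- Strong maximum principle, elliptic case: if u solves the mixed problem with
right-hand side f ∈ C_0^∞(Ω), f ≥ 0, and ξ0 solves it with right-hand side 1, then
u ≥ c (∫_Ω f ξ0) ξ0 in Ω for some c = c(N,s,Ω,Σ₁,Σ₂) > 0. -/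
theorem elliptic_strong_maximum_principle
    {N : ℕ} (hN : 1 ≤ N) {s aNs : ℝ} (hs0 : 0 < s) (hs1 : s < 1) (haNs : 0 < aNs)
    {Ω S1 S2 : Set (Rn N)} (hΩo : IsOpen Ω) (hΩb : Bornology.IsBounded Ω)
    (hΩc : IsConnected Ω)
    (hS1o : IsOpen S1) (hS2o : IsOpen S2)
    (hS1m : 0 < volume S1) (hS2m : 0 < volume S2)
    (hdisj : Disjoint S1 S2) (hcov : closure S1 ∪ closure S2 = Ωᶜ)
    (f : Rn N → ℝ) (hf_smooth : ContDiff ℝ (⊤ : ℕ∞) f) (hf_supp : HasCompactSupport f)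
    (hf_suppΩ : tsupport f ⊆ Ω) (hf_nonneg : ∀ x, 0 ≤ f x)
    (u : Rn N → ℝ) (hu : IsWeakSolMixed N s aNs Ω S1 f u)
    (hu_nonneg : ∀ᵐ x : Rn N, 0 ≤ u x)
    (ξ0 : Rn N → ℝ) (hξ0 : IsWeakSolMixed N s aNs Ω S1 (fun _ => 1) ξ0) :
    ∃ c : ℝ, 0 < c ∧
      ∀ᵐ x : Rn N, x ∈ Ω →
        c * (∫ y in Ω, f y * ξ0 y) * ξ0 x ≤ u x := by
  have hexp : 0 ≤ (N : ℝ) + 2 * s := by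
    have : (0 : ℝ) ≤ N := Nat.cast_nonneg N
    linarith
  have hΩmeas : MeasurableSet Ω := hΩo.measurableSet
  have hΩfin : volume Ω < ⊤ := hΩb.measure_lt_top
  have hKsymm : frKer N s u ξ0 = frKer N s ξ0 u := by
    funext p; unfold frKer; ring
  have hAm : (∫ y in Ω, f y * ξ0 y) = ∫ x in Ω, u x := by
    calc (∫ y in Ω, f y * ξ0 y)
        = (aNs / 2) * ∫ p in Qset N Ω, frKer N s u ξ0 p := (hu.2 ξ0 hξ0.1).symm
      _ = (aNs / 2) * ∫ p in Qset N Ω, frKer N s ξ0 u p := by rw [hKsymm]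
      _ = ∫ x in Ω, (fun _ => (1 : ℝ)) x * u x := hξ0.2 u hu.1
      _ = ∫ x in Ω, u x := by simp
  have hm0 : 0 ≤ ∫ x in Ω, u x :=
    integral_nonneg_of_ae (ae_restrict_of_ae hu_nonneg)
  rcases hm0.eq_or_lt with hm | hm
  · -- trivial case: ∫_Ω u = 0
    refine ⟨1, one_pos, ?_⟩
    filter_upwards [hu_nonneg] with x hx _
    rw [hAm, ← hm]
    simpa using hx
  -- main case: m := ∫_Ω u > 0
  obtain ⟨humeas, huS1, husq, huK⟩ := hu.1
  obtain ⟨hξmeas, hξS1, hξsq, hξK⟩ := hξ0.1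
  set m := ∫ x in Ω, u x with hmdef
  have huL1 : IntegrableOn u Ω := integrableOn_of_sq humeas husq hΩfin
  have hξL1 : IntegrableOn ξ0 Ω := integrableOn_of_sq hξmeas hξsq hΩfin
  -- a uniform bound for ‖x - y‖ on Ω × Ω
  obtain ⟨R, hR⟩ := hΩb.subset_closedBall (0 : Rn N)
  set D : ℝ := 2 * |R| + 1 with hDdef
  have hD : 0 < D := by positivity
  have hdist : ∀ x ∈ Ω, ∀ y ∈ Ω, ‖x - y‖ ≤ D := by
    intro x hx y hy
    have h1 : ‖x‖ ≤ R := by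
      have := hR hx; rwa [Metric.mem_closedBall, dist_zero_right] at this
    have h2 : ‖y‖ ≤ R := by
      have := hR hy; rwa [Metric.mem_closedBall, dist_zero_right] at this
    have h3 := norm_sub_le x y
    have h4 := le_abs_self R
    rw [hDdef]; linarith
  set Dp : ℝ := D ^ ((N : ℝ) + 2 * s) with hDpdef
  have hDp : 0 < Dp := Real.rpow_pos_of_pos hD _
  set I := ∫ x in Ω, ξ0 x with hIdef
  set κ : ℝ := aNs * Dp⁻¹ * (m / 2) with hκdef
  have hκ : 0 < κ := by positivity
  set δ : ℝ := min (m / (2 * (|I| + 1))) (κ / 2) with hδdef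
  have hδ : 0 < δ := lt_min (by positivity) (by positivity)
  -- the test function φ = (δ ξ0 - u)⁺
  set w : Rn N → ℝ := fun x => δ * ξ0 x - u x with hwdef
  set φ : Rn N → ℝ := fun x => max (w x) 0 with hφdef
  set F : Rn N → ℝ := fun x => max (-(w x)) 0 with hFdef
  have hwmeas : Measurable w := by
    simp only [hwdef]; exact (measurable_const.mul hξmeas).sub humeas
  have hφmeas : Measurable φ := by
    simp only [hφdef]; exact hwmeas.max measurable_const
  have hφ_nonneg : ∀ x, 0 ≤ φ x := fun x => by
    simp only [hφdef]; exact le_max_right _ _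
  -- membership of φ in the energy space
  have hφS1 : ∀ᵐ x : Rn N, x ∈ S1 → φ x = 0 := by
    filter_upwards [huS1, hξS1] with x h1 h2 hx
    simp [hφdef, hwdef, h1 hx, h2 hx]
  have hφsq : IntegrableOn (fun x => (φ x) ^ 2) Ω := by
    refine ((hξsq.const_mul (2 * δ ^ 2)).add (husq.const_mul 2)).mono'
      ((hφmeas.pow_const 2).aestronglyMeasurable) (ae_of_all _ fun x => ?_)
    rw [Real.norm_eq_abs, abs_of_nonneg (sq_nonneg _)]
    simp only [Pi.add_apply]
    have h1 : (φ x) ^ 2 ≤ (δ * ξ0 x - u x) ^ 2 := by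
      simp only [hφdef, hwdef]
      rcases le_total (δ * ξ0 x - u x) 0 with h | h
      · rw [max_eq_right h]; simpa using sq_nonneg (δ * ξ0 x - u x)
      · rw [max_eq_left h]
    nlinarith [sq_nonneg (δ * ξ0 x + u x)]
  have hKw_le : ∀ p, frKer N s w w p ≤
      2 * δ ^ 2 * frKer N s ξ0 ξ0 p + 2 * frKer N s u u p := by
    intro p
    have hd : 0 ≤ ‖p.1 - p.2‖ ^ ((N : ℝ) + 2 * s) := Real.rpow_nonneg (norm_nonneg _) _
    have heq : 2 * δ ^ 2 * frKer N s ξ0 ξ0 p + 2 * frKer N s u u p =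
        (2 * δ ^ 2 * ((ξ0 p.1 - ξ0 p.2) * (ξ0 p.1 - ξ0 p.2)) +
          2 * ((u p.1 - u p.2) * (u p.1 - u p.2))) / ‖p.1 - p.2‖ ^ ((N : ℝ) + 2 * s) := by
      unfold frKer; ring
    rw [heq]
    show (w p.1 - w p.2) * (w p.1 - w p.2) / ‖p.1 - p.2‖ ^ ((N : ℝ) + 2 * s) ≤ _
    refine div_le_div_of_nonneg_right ?_ hd
    simp only [hwdef]
    nlinarith [sq_nonneg (δ * (ξ0 p.1 - ξ0 p.2) + (u p.1 - u p.2))]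
  have hKφ_le : ∀ p, frKer N s φ φ p ≤ frKer N s w w p := by
    intro p
    show (φ p.1 - φ p.2) * (φ p.1 - φ p.2) / ‖p.1 - p.2‖ ^ ((N : ℝ) + 2 * s) ≤
      (w p.1 - w p.2) * (w p.1 - w p.2) / ‖p.1 - p.2‖ ^ ((N : ℝ) + 2 * s)
    refine div_le_div_of_nonneg_right ?_ (Real.rpow_nonneg (norm_nonneg _) _)
    have h : |φ p.1 - φ p.2| ≤ |w p.1 - w p.2| := by
      simp only [hφdef]; exact abs_max_sub_max_le_abs _ _ _
    calc (φ p.1 - φ p.2) * (φ p.1 - φ p.2) = |φ p.1 - φ p.2| * |φ p.1 - φ p.2| :=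
        (abs_mul_abs_self _).symm
      _ ≤ |w p.1 - w p.2| * |w p.1 - w p.2| :=
        mul_le_mul h h (abs_nonneg _) (abs_nonneg _)
      _ = (w p.1 - w p.2) * (w p.1 - w p.2) := abs_mul_abs_self _
  have hφK : IntegrableOn (frKer N s φ φ) (Qset N Ω) := by
    refine ((hξK.const_mul (2 * δ ^ 2)).add (huK.const_mul 2)).mono'
      ((measurable_frKer hφmeas hφmeas hexp).aestronglyMeasurable)
      (ae_of_all _ fun p => ?_)
    rw [Real.norm_eq_abs, abs_of_nonneg (frKer_self_nonneg φ p)]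
    simp only [Pi.add_apply]
    exact le_trans (hKφ_le p) (hKw_le p)
  have hφE : MemE N s Ω S1 φ := ⟨hφmeas, hφS1, hφsq, hφK⟩
  -- test the two equations with φ
  have hEq1 := hu.2 φ hφE
  have hEq2 : (aNs / 2) * ∫ p in Qset N Ω, frKer N s ξ0 φ p = ∫ x in Ω, φ x := by
    have := hξ0.2 φ hφE; simpa using this
  set P := ∫ x in Ω, φ x with hPdef
  have hP0 : 0 ≤ P := integral_nonneg fun x => hφ_nonneg x
  have hKuφ : IntegrableOn (frKer N s u φ) (Qset N Ω) :=
    integrableOn_frKer_mixed humeas hφmeas hexp huK hφK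
  have hKξφ : IntegrableOn (frKer N s ξ0 φ) (Qset N Ω) :=
    integrableOn_frKer_mixed hξmeas hφmeas hexp hξK hφK
  have hlin : frKer N s w φ = fun p => δ * frKer N s ξ0 φ p - frKer N s u φ p := by
    funext p; simp only [frKer, hwdef]; ring
  have hKwφ : IntegrableOn (frKer N s w φ) (Qset N Ω) := by
    rw [hlin]; exact (hKξφ.const_mul δ).sub hKuφ
  have hsplit : ∫ p in Qset N Ω, frKer N s w φ p =
      δ * (∫ p in Qset N Ω, frKer N s ξ0 φ p) - ∫ p in Qset N Ω, frKer N s u φ p := by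
    rw [hlin, integral_sub (hKξφ.const_mul δ) hKuφ, integral_const_mul]
  have key : (aNs / 2) * ∫ p in Qset N Ω, frKer N s w φ p
      = δ * P - ∫ x in Ω, f x * φ x := by
    rw [hsplit, ← hEq2, ← hEq1]; ring
  -- decomposition of the kernel
  set g : Rn N × Rn N → ℝ := fun p =>
    (max (-(w p.1)) 0 * max (w p.2) 0 + max (w p.1) 0 * max (-(w p.2)) 0) /
      ‖p.1 - p.2‖ ^ ((N : ℝ) + 2 * s) with hgdef
  have hdec : ∀ p, frKer N s w φ p = frKer N s φ φ p + g p := by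
    intro p
    simp only [hgdef, hφdef, frKer]
    rw [← add_div]
    congr 1
    exact pos_identity _ _
  have hg_nonneg : ∀ p, 0 ≤ g p := by
    intro p
    simp only [hgdef]
    exact div_nonneg
      (add_nonneg (mul_nonneg (le_max_right _ _) (le_max_right _ _))
        (mul_nonneg (le_max_right _ _) (le_max_right _ _)))
      (Real.rpow_nonneg (norm_nonneg _) _)
  have hgInt : IntegrableOn g (Qset N Ω) := by
    have hgeq : g = fun p => frKer N s w φ p - frKer N s φ φ p := by
      funext p; rw [hdec p]; ring
    rw [hgeq]; exact hKwφ.sub hφK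
  have h_sum : ∫ p in Qset N Ω, frKer N s w φ p =
      (∫ p in Qset N Ω, frKer N s φ φ p) + ∫ p in Qset N Ω, g p := by
    rw [← integral_add hφK hgInt]
    exact integral_congr_ae (ae_of_all _ fun p => hdec p)
  have hpos1 : 0 ≤ ∫ p in Qset N Ω, frKer N s φ φ p :=
    integral_nonneg fun p => frKer_self_nonneg φ p
  have hsub : Ω ×ˢ Ω ⊆ Qset N Ω := by
    rintro ⟨x, y⟩ ⟨hx, hy⟩
    exact ⟨trivial, fun h => h.1 hx⟩
  have hQg : ∫ p in Ω ×ˢ Ω, g p ≤ ∫ p in Qset N Ω, g p :=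
    setIntegral_mono_set hgInt (ae_of_all _ hg_nonneg) (HasSubset.Subset.eventuallyLE hsub)
  -- L¹ bounds for F and φ
  have hFmeas : Measurable F := by
    simp only [hFdef]; exact hwmeas.neg.max measurable_const
  have hFL1 : IntegrableOn F Ω := by
    refine ((hξL1.abs.const_mul δ).add huL1.abs).mono'
      (hFmeas.aestronglyMeasurable) (ae_of_all _ fun x => ?_)
    rw [Real.norm_eq_abs]
    simp only [Pi.add_apply]
    simp only [hFdef]
    have h1 : max (-(w x)) 0 ≤ |w x| := max_le (neg_le_abs _) (abs_nonneg _)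
    have h2 : |max (-(w x)) 0| = max (-(w x)) 0 := abs_of_nonneg (le_max_right _ _)
    have h3 : |w x| ≤ δ * |ξ0 x| + |u x| := by
      simp only [hwdef]
      calc |δ * ξ0 x - u x| ≤ |δ * ξ0 x| + |u x| := abs_sub _ _
        _ = δ * |ξ0 x| + |u x| := by rw [abs_mul, abs_of_pos hδ]
    rw [h2]
    linarith
  have hφL1 : IntegrableOn φ Ω := by
    refine ((hξL1.abs.const_mul δ).add huL1.abs).mono'
      (hφmeas.aestronglyMeasurable) (ae_of_all _ fun x => ?_)
    rw [Real.norm_eq_abs]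
    simp only [Pi.add_apply]
    simp only [hφdef]
    have h1 : max (w x) 0 ≤ |w x| := max_le (le_abs_self _) (abs_nonneg _)
    have h2 : |max (w x) 0| = max (w x) 0 := abs_of_nonneg (le_max_right _ _)
    have h3 : |w x| ≤ δ * |ξ0 x| + |u x| := by
      simp only [hwdef]
      calc |δ * ξ0 x - u x| ≤ |δ * ξ0 x| + |u x| := abs_sub _ _
        _ = δ * |ξ0 x| + |u x| := by rw [abs_mul, abs_of_pos hδ]
    rw [h2]
    linarith
  -- lower bound for ∫ F
  have hFhalf : m / 2 ≤ ∫ x in Ω, F x := by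
    have h1 : ∫ x in Ω, (u x - δ * ξ0 x) ≤ ∫ x in Ω, F x := by
      refine integral_mono (huL1.sub (hξL1.const_mul δ)) hFL1 fun x => ?_
      simp only [hFdef, hwdef]
      have heq : u x - δ * ξ0 x = -(δ * ξ0 x - u x) := by ring
      rw [heq]
      exact le_max_left _ _
    have h2 : ∫ x in Ω, (u x - δ * ξ0 x) = m - δ * I := by
      rw [integral_sub huL1 (hξL1.const_mul δ), integral_const_mul, ← hmdef, ← hIdef]
    have hδ1 : δ * (2 * (|I| + 1)) ≤ m := by
      have h := min_le_left (m / (2 * (|I| + 1))) (κ / 2)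
      rw [← hδdef] at h
      rw [le_div_iff₀ (by positivity)] at h
      exact h
    have h3 : δ * I ≤ m / 2 := by
      nlinarith [mul_le_mul_of_nonneg_left (le_abs_self I) hδ.le, abs_nonneg I, hδ.le]
    linarith
  -- product structure on Ω × Ω
  have hmeasrw : (volume : Measure (Rn N × Rn N)).restrict (Ω ×ˢ Ω) =
      (volume.restrict Ω).prod (volume.restrict Ω) := by
    rw [Measure.volume_eq_prod, Measure.prod_restrict]
  have hprodF : Integrable (fun p : Rn N × Rn N => F p.1 * φ p.2)
      ((volume.restrict Ω).prod (volume.restrict Ω)) := hFL1.mul_prod hφL1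
  have hprodG : Integrable (fun p : Rn N × Rn N => φ p.1 * F p.2)
      ((volume.restrict Ω).prod (volume.restrict Ω)) := hφL1.mul_prod hFL1
  set h : Rn N × Rn N → ℝ :=
    fun p => Dp⁻¹ * (F p.1 * φ p.2) + Dp⁻¹ * (φ p.1 * F p.2) with hhdef
  have hInth : IntegrableOn h (Ω ×ˢ Ω) := by
    simp only [hhdef]
    unfold IntegrableOn
    rw [hmeasrw]
    exact (hprodF.const_mul _).add (hprodG.const_mul _)
  have h_int_eq : ∫ p in Ω ×ˢ Ω, h p =
      Dp⁻¹ * ((∫ x in Ω, F x) * P) + Dp⁻¹ * (P * (∫ x in Ω, F x)) := by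
    simp only [hhdef]
    rw [hmeasrw, integral_add (hprodF.const_mul _) (hprodG.const_mul _),
      integral_const_mul, integral_const_mul, integral_prod_mul, integral_prod_mul, ← hPdef]
  have h_le_g : ∀ p ∈ Ω ×ˢ Ω, h p ≤ g p := by
    rintro ⟨x, y⟩ ⟨hx, hy⟩
    simp only [hhdef, hgdef, hφdef, hFdef]
    by_cases hxy : (x : Rn N) = y
    · subst hxy
      rw [max_neg_mul_max (w x), mul_comm (max (w x) 0) (max (-(w x)) 0),
        max_neg_mul_max (w x)]
      simp only [mul_zero, add_zero]
      exact div_nonneg (by simp) (Real.rpow_nonneg (norm_nonneg _) _)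
    · have hd0 : 0 < ‖x - y‖ := by rw [norm_sub_pos_iff]; exact hxy
      have hdle : ‖x - y‖ ^ ((N : ℝ) + 2 * s) ≤ Dp := by
        rw [hDpdef]
        exact Real.rpow_le_rpow (norm_nonneg _) (hdist x hx y hy) hexp
      have hdpos : 0 < ‖x - y‖ ^ ((N : ℝ) + 2 * s) := Real.rpow_pos_of_pos hd0 _
      have hn : 0 ≤ max (-(w x)) 0 * max (w y) 0 + max (w x) 0 * max (-(w y)) 0 :=
        add_nonneg (mul_nonneg (le_max_right _ _) (le_max_right _ _))
          (mul_nonneg (le_max_right _ _) (le_max_right _ _))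
      have heq : Dp⁻¹ * (max (-(w x)) 0 * max (w y) 0) +
          Dp⁻¹ * (max (w x) 0 * max (-(w y)) 0) =
          (max (-(w x)) 0 * max (w y) 0 + max (w x) 0 * max (-(w y)) 0) / Dp := by
        rw [div_eq_mul_inv]; ring
      rw [heq]
      exact div_le_div_of_nonneg_left hn hdpos hdle
  have h4 : ∫ p in Ω ×ˢ Ω, h p ≤ ∫ p in Ω ×ˢ Ω, g p :=
    setIntegral_mono_on hInth (hgInt.mono_set hsub) (hΩmeas.prod hΩmeas) h_le_g
  have c1 : ∫ p in Ω ×ˢ Ω, g p ≤ ∫ p in Qset N Ω, frKer N s w φ p := by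
    rw [h_sum]; linarith
  have c2 : κ * P ≤ (aNs / 2) * ∫ p in Qset N Ω, frKer N s w φ p := by
    have s1 : κ * P ≤ aNs * Dp⁻¹ * ((∫ x in Ω, F x) * P) := by
      have h' := mul_le_mul_of_nonneg_left
        (mul_le_mul_of_nonneg_right hFhalf hP0)
        (by positivity : (0 : ℝ) ≤ aNs * Dp⁻¹)
      calc κ * P = aNs * Dp⁻¹ * (m / 2 * P) := by rw [hκdef]; ring
        _ ≤ aNs * Dp⁻¹ * ((∫ x in Ω, F x) * P) := h'
    have s2 : aNs * Dp⁻¹ * ((∫ x in Ω, F x) * P) = (aNs / 2) * ∫ p in Ω ×ˢ Ω, h p := by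
      rw [h_int_eq]; ring
    have s3 : (aNs / 2) * ∫ p in Ω ×ˢ Ω, h p ≤ (aNs / 2) * ∫ p in Ω ×ˢ Ω, g p :=
      mul_le_mul_of_nonneg_left h4 (by positivity)
    have s4 : (aNs / 2) * ∫ p in Ω ×ˢ Ω, g p ≤
        (aNs / 2) * ∫ p in Qset N Ω, frKer N s w φ p :=
      mul_le_mul_of_nonneg_left c1 (by positivity)
    linarith
  have hfφ0 : 0 ≤ ∫ x in Ω, f x * φ x :=
    integral_nonneg fun x => mul_nonneg (hf_nonneg x) (hφ_nonneg x)
  have hPzero : P = 0 := by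
    have h5 : κ * P ≤ δ * P := by
      rw [key] at c2; linarith
    have hδκ2 : δ ≤ κ / 2 := min_le_right _ _
    have h6 : δ * P ≤ (κ / 2) * P := mul_le_mul_of_nonneg_right hδκ2 hP0
    have hPle : P ≤ 0 := by nlinarith
    exact le_antisymm hPle hP0
  have hintzero : ∫ x in Ω, φ x = 0 := by rw [← hPdef]; exact hPzero
  have hφae : ∀ᵐ x ∂(volume.restrict Ω), φ x = 0 := by
    have := (integral_eq_zero_iff_of_nonneg (fun x => hφ_nonneg x) hφL1).1 hintzero
    filter_upwards [this] with x hx using hx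
  have hae2 : ∀ᵐ x : Rn N, x ∈ Ω → φ x = 0 := by
    rw [← ae_restrict_iff' hΩmeas]
    exact hφae
  refine ⟨δ / m, div_pos hδ hm, ?_⟩
  filter_upwards [hae2] with x hx hxΩ
  have h0 : φ x = 0 := hx hxΩ
  have h1 : δ * ξ0 x - u x ≤ 0 := by
    have h2 := le_max_left (δ * ξ0 x - u x) 0
    have h3 : max (δ * ξ0 x - u x) 0 = φ x := by simp only [hφdef, hwdef]
    rw [h3, h0] at h2
    exact h2
  rw [hAm, div_mul_cancel₀ δ (ne_of_gt hm)]
  linarith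
end
end

section
/- The space E^s_{Σ1} (with functions identified when equal a.e.), endowed with the bilinear form ⟨u, v⟩ := ∫_Ω u v dx + ∬_Q (u(x) − u(y))(v(x) − v(y)) / |x − y|^{N+2s} dx dy, is a Hilbert space: this form is a well-defined inner product on E^s_{Σ1}, and E^s_{Σ1} is complete with respect to the induced norm. -/
/-! The map `u ↦ (u|_Ω, (x, y) ↦ u x - u y)` is an isometry of `E^s_{Σ₁}` into
`L²(Ω) × L²(Q, |x - y|^{-N-2s} dx dy)`. Hence the bilinear form is well defined by
Cauchy–Schwarz, and a Cauchy sequence `uₙ` converges in both `L²` spaces, along a subsequence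
also almost everywhere. Since `Ω × Ωᶜ ⊆ Q` and `uₙ y = uₙ x - (uₙ x - uₙ y)`, fixing a good
`x ∈ Ω` turns convergence on `Ω` and on pairs into pointwise convergence on `Ωᶜ`; the resulting
a.e. limit represents both `L²` limits. The same device shows that a function of norm zero
vanishes a.e. on `Ωᶜ` and not only on `Ω`. -/

open MeasureTheory Set

noncomputable section

open Filter Topology
open scoped NNReal

section LTwo

variable {α : Type*} [MeasurableSpace α] {μ : Measure α}

theorem MeasureTheory.MemLp.integral_sq_sub_eq_dist_sq {f g : α → ℝ} (hf : MemLp f 2 μ)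
    (hg : MemLp g 2 μ) :
    ∫ x, (f x - g x) ^ 2 ∂μ = dist (hf.toLp f) (hg.toLp g) ^ 2 := by
  rw [dist_eq_norm, ← MemLp.toLp_sub, ← real_inner_self_eq_norm_sq, L2.inner_def]
  refine integral_congr_ae ?_
  filter_upwards [(hf.sub hg).coeFn_toLp] with x hx
  simp [hx, sq]

theorem exists_memLp_tendsto_integral_sq_sub_of_cauchy {f : ℕ → α → ℝ}
    (hf : ∀ n, MemLp (f n) 2 μ)
    (hcauchy : ∀ ε > 0, ∃ M, ∀ m n, M ≤ m → M ≤ n → ∫ x, (f m x - f n x) ^ 2 ∂μ < ε) :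
    ∃ g, MemLp g 2 μ ∧ Tendsto (fun n => ∫ x, (f n x - g x) ^ 2 ∂μ) atTop (𝓝 0) := by
  have hF : CauchySeq fun n => (hf n).toLp (f n) := by
    refine Metric.cauchySeq_iff.2 fun ε hε => ?_
    obtain ⟨M, hM⟩ := hcauchy (ε ^ 2) (by positivity)
    refine ⟨M, fun m hm n hn => ?_⟩
    have h := hM m n hm hn
    rw [(hf m).integral_sq_sub_eq_dist_sq (hf n)] at h
    exact (pow_lt_pow_iff_left₀ dist_nonneg hε.le two_ne_zero).1 h
  obtain ⟨g, hg⟩ := cauchySeq_tendsto_of_complete hF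
  refine ⟨g, Lp.memLp g, ?_⟩
  have h := (tendsto_iff_dist_tendsto_zero.1 hg).pow 2
  rw [zero_pow two_ne_zero] at h
  refine h.congr fun n => ?_
  rw [(hf n).integral_sq_sub_eq_dist_sq (Lp.memLp g), Lp.toLp_coeFn]

theorem exists_subseq_ae_tendsto_of_tendsto_integral_sq_sub {f : ℕ → α → ℝ} {g : α → ℝ}
    (hf : ∀ n, MemLp (f n) 2 μ) (hg : MemLp g 2 μ)
    (hlim : Tendsto (fun n => ∫ x, (f n x - g x) ^ 2 ∂μ) atTop (𝓝 0)) :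
    ∃ φ : ℕ → ℕ, StrictMono φ ∧ ∀ᵐ x ∂μ, Tendsto (fun i => f (φ i) x) atTop (𝓝 (g x)) := by
  have hLp : Tendsto (fun n => (hf n).toLp (f n)) atTop (𝓝 (hg.toLp g)) := by
    rw [tendsto_iff_dist_tendsto_zero]
    simpa [(hf _).integral_sq_sub_eq_dist_sq hg, Real.sqrt_sq dist_nonneg] using hlim.sqrt
  obtain ⟨φ, hφ, hae⟩ := (tendstoInMeasure_of_tendsto_Lp hLp).exists_seq_tendsto_ae
  refine ⟨φ, hφ, ?_⟩
  filter_upwards [hae, hg.coeFn_toLp, ae_all_iff.2 fun n => (hf n).coeFn_toLp] with x hx hgx hfx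
  rw [← hgx]
  exact hx.congr fun i => hfx (φ i)

end LTwo

theorem ae_of_ae_restrict_of_ae_prod_restrict_compl {α : Type*} [MeasurableSpace α]
    {μ : Measure α} [SFinite μ] {s : Set α} (hs : μ s ≠ 0) {p : α → Prop}
    (hp : ∀ᵐ x ∂μ.restrict s, p x)
    (hprop : ∀ᵐ z ∂(μ.restrict s).prod (μ.restrict sᶜ), p z.1 → p z.2) :
    ∀ᵐ x ∂μ, p x := by
  refine ae_of_ae_restrict_of_ae_restrict_compl s hp ?_
  have : (ae (μ.restrict s)).NeBot := ae_neBot.2 (by rwa [Ne, Measure.restrict_eq_zero])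
  have hsnd := (Measure.quasiMeasurePreserving_fst.ae hp).and hprop
  obtain ⟨x, hx⟩ := (Measure.ae_ae_of_ae_prod (hsnd.mono fun z hz => hz.2 hz.1)).exists
  exact hx

theorem ae_mem_imp_eq_zero_of_ae_tendsto {α : Type*} [MeasurableSpace α] {μ : Measure α}
    {S : Set α} {u : ℕ → α → ℝ} {v : α → ℝ} (hu : ∀ n, ∀ᵐ x ∂μ, x ∈ S → u n x = 0)
    (hv : ∀ᵐ x ∂μ, Tendsto (fun n => u n x) atTop (𝓝 (v x))) :
    ∀ᵐ x ∂μ, x ∈ S → v x = 0 := by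
  filter_upwards [ae_all_iff.2 hu, hv] with x hx hlim hxS
  exact tendsto_nhds_unique hlim (tendsto_const_nhds.congr fun n => (hx n hxS).symm)

def pairDiff {α : Type*} (u : α → ℝ) (p : α × α) : ℝ := u p.1 - u p.2

theorem Measurable.pairDiff {α : Type*} [MeasurableSpace α] {u : α → ℝ} (hu : Measurable u) :
    Measurable (pairDiff u) :=
  (hu.comp measurable_fst).sub (hu.comp measurable_snd)

def gagliardoWeight (N : ℕ) (s : ℝ) (p : Rn N × Rn N) : ℝ≥0 :=
  (‖p.1 - p.2‖₊ ^ ((N : ℝ) + 2 * s))⁻¹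

def gagliardoMeasure (N : ℕ) (s : ℝ) (Ω : Set (Rn N)) : Measure (Rn N × Rn N) :=
  (volume.restrict (Qset N Ω)).withDensity fun p => gagliardoWeight N s p

section Gagliardo

variable {N : ℕ} {s : ℝ} {Ω S1 : Set (Rn N)}

theorem measurable_gagliardoWeight : Measurable (gagliardoWeight N s) := by
  unfold gagliardoWeight; fun_prop

theorem gagliardoWeight_ne_zero {p : Rn N × Rn N} (hp : p.1 ≠ p.2) :
    gagliardoWeight N s p ≠ 0 := by
  unfold gagliardoWeight
  exact inv_ne_zero (NNReal.rpow_pos (nnnorm_pos.2 (sub_ne_zero.2 hp))).ne'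

theorem frKer_eq_gagliardoWeight_smul (u v : Rn N → ℝ) :
    frKer N s u v = fun p => gagliardoWeight N s p • (pairDiff u p * pairDiff v p) := by
  ext p
  simp only [frKer, gagliardoWeight, pairDiff, NNReal.smul_def, NNReal.coe_inv, NNReal.coe_rpow,
    coe_nnnorm, smul_eq_mul]
  ring

theorem integrableOn_frKer_iff {u v : Rn N → ℝ} :
    IntegrableOn (frKer N s u v) (Qset N Ω) ↔
      Integrable (fun p => pairDiff u p * pairDiff v p) (gagliardoMeasure N s Ω) := by
  rw [gagliardoMeasure, integrable_withDensity_iff_integrable_smul measurable_gagliardoWeight,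
    IntegrableOn, frKer_eq_gagliardoWeight_smul]

theorem setIntegral_frKer (u v : Rn N → ℝ) :
    ∫ p in Qset N Ω, frKer N s u v p =
      ∫ p, pairDiff u p * pairDiff v p ∂gagliardoMeasure N s Ω := by
  rw [gagliardoMeasure, integral_withDensity_eq_integral_smul measurable_gagliardoWeight,
    frKer_eq_gagliardoWeight_smul]

theorem setIntegral_frKer_sub (u v : Rn N → ℝ) :
    ∫ p in Qset N Ω, frKer N s (fun z => u z - v z) (fun z => u z - v z) p =
      ∫ p, (pairDiff u p - pairDiff v p) ^ 2 ∂gagliardoMeasure N s Ω := by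
  rw [setIntegral_frKer]
  congr 1 with p
  simp only [pairDiff]
  ring

theorem memE_iff {u : Rn N → ℝ} :
    MemE N s Ω S1 u ↔ Measurable u ∧ (∀ᵐ x, x ∈ S1 → u x = 0) ∧
      MemLp u 2 (volume.restrict Ω) ∧ MemLp (pairDiff u) 2 (gagliardoMeasure N s Ω) := by
  refine and_congr_right fun hu => and_congr_right fun _ => and_congr ?_ ?_
  · exact (memLp_two_iff_integrable_sq hu.aestronglyMeasurable).symm
  · rw [memLp_two_iff_integrable_sq hu.pairDiff.aestronglyMeasurable, integrableOn_frKer_iff]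
    simp only [sq]

theorem gagliardoMeasure_absolutelyContinuous : gagliardoMeasure N s Ω ≪ volume :=
  (withDensity_absolutelyContinuous _ _).trans Measure.restrict_le_self.absolutelyContinuous

theorem prod_restrict_compl_absolutelyContinuous_gagliardoMeasure (hΩ : MeasurableSet Ω) :
    (volume.restrict Ω).prod (volume.restrict Ωᶜ) ≪ gagliardoMeasure N s Ω := by
  have hsub : Ω ×ˢ Ωᶜ ⊆ Qset N Ω := fun p hp => ⟨mem_univ _, fun h => h.1 hp.1⟩
  have hmeas : MeasurableSet (Ω ×ˢ Ωᶜ) := hΩ.prod hΩ.compl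
  rw [Measure.prod_restrict, ← Measure.volume_eq_prod, ← Measure.restrict_restrict_of_subset hsub]
  refine (withDensity_absolutelyContinuous'
    measurable_gagliardoWeight.coe_nnreal_ennreal.aemeasurable ?_).trans
    (restrict_withDensity hmeas _ ▸ Measure.restrict_le_self.absolutelyContinuous)
  filter_upwards [ae_restrict_mem hmeas] with p hp
  exact ENNReal.coe_ne_zero.2 (gagliardoWeight_ne_zero fun h => hp.2 (h ▸ hp.1))

theorem MemE.integrableOn_mul_and_integrableOn_frKer {u v : Rn N → ℝ} (hu : MemE N s Ω S1 u)
    (hv : MemE N s Ω S1 v) :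
    IntegrableOn (fun x => u x * v x) Ω ∧ IntegrableOn (frKer N s u v) (Qset N Ω) := by
  rw [memE_iff] at hu hv
  exact ⟨hu.2.2.1.integrable_mul hv.2.2.1,
    integrableOn_frKer_iff.2 (hu.2.2.2.integrable_mul hv.2.2.2)⟩

theorem MemE.ae_eq_zero_of_integral_add_integral_eq_zero (hΩ : MeasurableSet Ω)
    (hΩ0 : volume Ω ≠ 0) {u : Rn N → ℝ} (hu : MemE N s Ω S1 u)
    (h : (∫ x in Ω, u x * u x) + ∫ p in Qset N Ω, frKer N s u u p = 0) :
    ∀ᵐ x, u x = 0 := by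
  obtain ⟨hΩint, hQint⟩ := hu.integrableOn_mul_and_integrableOn_frKer hu
  rw [setIntegral_frKer] at h
  rw [integrableOn_frKer_iff] at hQint
  rw [add_eq_zero_iff_of_nonneg (integral_nonneg fun _ => mul_self_nonneg _)
    (integral_nonneg fun _ => mul_self_nonneg _),
    integral_eq_zero_iff_of_nonneg (fun _ => mul_self_nonneg _) hΩint,
    integral_eq_zero_iff_of_nonneg (fun _ => mul_self_nonneg _) hQint] at h
  refine ae_of_ae_restrict_of_ae_prod_restrict_compl hΩ0
    (h.1.mono fun x hx => mul_self_eq_zero.1 hx) ?_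
  filter_upwards [(prod_restrict_compl_absolutelyContinuous_gagliardoMeasure hΩ).ae_le h.2]
    with p hp hp1
  simp only [Pi.zero_apply, mul_self_eq_zero, pairDiff, hp1, zero_sub, neg_eq_zero] at hp
  exact hp

theorem exists_measurable_ae_tendsto_of_ae_tendsto_pairDiff (hΩ : MeasurableSet Ω)
    (hΩ0 : volume Ω ≠ 0) {u : ℕ → Rn N → ℝ} (hu : ∀ n, Measurable (u n))
    {f : Rn N → ℝ} {g : Rn N × Rn N → ℝ}
    (hf : ∀ᵐ x ∂volume.restrict Ω, Tendsto (fun n => u n x) atTop (𝓝 (f x)))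
    (hg : ∀ᵐ p ∂gagliardoMeasure N s Ω, Tendsto (fun n => pairDiff (u n) p) atTop (𝓝 (g p))) :
    ∃ v, Measurable v ∧ ∀ᵐ x, Tendsto (fun n => u n x) atTop (𝓝 (v x)) := by
  refine measurable_limit_of_tendsto_metrizable_ae (fun n => (hu n).aemeasurable) ?_
  refine ae_of_ae_restrict_of_ae_prod_restrict_compl hΩ0 (hf.mono fun x hx => ⟨f x, hx⟩) ?_
  filter_upwards [(prod_restrict_compl_absolutelyContinuous_gagliardoMeasure hΩ).ae_le hg]
    with p hp ⟨l, hl⟩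
  exact ⟨l - g p, (hl.sub hp).congr fun n => by simp only [pairDiff]; ring⟩

theorem ae_gagliardoMeasure_of_ae {P : Rn N → Prop} (h : ∀ᵐ x, P x) :
    ∀ᵐ p ∂gagliardoMeasure N s Ω, P p.1 ∧ P p.2 := by
  refine gagliardoMeasure_absolutelyContinuous.ae_le ?_
  rw [Measure.volume_eq_prod]
  exact (Measure.quasiMeasurePreserving_fst.ae h).and (Measure.quasiMeasurePreserving_snd.ae h)

theorem MemE.exists_tendsto_of_cauchy (hΩ : MeasurableSet Ω) (hΩ0 : volume Ω ≠ 0)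
    {u : ℕ → Rn N → ℝ} (hu : ∀ n, MemE N s Ω S1 (u n))
    (hC : ∀ ε : ℝ, 0 < ε → ∃ M : ℕ, ∀ m n : ℕ, M ≤ m → M ≤ n →
      (∫ x in Ω, (u m x - u n x) ^ 2) +
        (∫ p in Qset N Ω, frKer N s (fun z => u m z - u n z) (fun z => u m z - u n z) p) < ε) :
    ∃ v, MemE N s Ω S1 v ∧ Tendsto (fun n => (∫ x in Ω, (u n x - v x) ^ 2) +
      ∫ p in Qset N Ω, frKer N s (fun z => u n z - v z) (fun z => u n z - v z) p) atTop (𝓝 0) := by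
  simp only [setIntegral_frKer_sub] at hC ⊢
  have hmem := fun n => memE_iff.1 (hu n)
  obtain ⟨f, hfL, hf⟩ := exists_memLp_tendsto_integral_sq_sub_of_cauchy
    (fun n => (hmem n).2.2.1) fun ε hε => (hC ε hε).imp fun M hM m n hm hn =>
      (le_add_of_nonneg_right (integral_nonneg fun _ => sq_nonneg _)).trans_lt (hM m n hm hn)
  obtain ⟨g, hgL, hg⟩ := exists_memLp_tendsto_integral_sq_sub_of_cauchy
    (fun n => (hmem n).2.2.2) fun ε hε => (hC ε hε).imp fun M hM m n hm hn =>
      (le_add_of_nonneg_left (integral_nonneg fun _ => sq_nonneg _)).trans_lt (hM m n hm hn)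
  obtain ⟨φ, hφ, hfφ⟩ :=
    exists_subseq_ae_tendsto_of_tendsto_integral_sq_sub (fun n => (hmem n).2.2.1) hfL hf
  obtain ⟨ψ, hψ, hgψ⟩ := exists_subseq_ae_tendsto_of_tendsto_integral_sq_sub
    (fun n => (hmem (φ n)).2.2.2) hgL (hg.comp hφ.tendsto_atTop)
  obtain ⟨v, hvm, hv⟩ := exists_measurable_ae_tendsto_of_ae_tendsto_pairDiff hΩ hΩ0
    (fun n => (hmem (φ (ψ n))).1) (hfφ.mono fun x hx => hx.comp hψ.tendsto_atTop) hgψ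
  have hvf : v =ᵐ[volume.restrict Ω] f := by
    filter_upwards [ae_restrict_of_ae hv, hfφ] with x hx hfx
    exact tendsto_nhds_unique hx (hfx.comp hψ.tendsto_atTop)
  have hvg : pairDiff v =ᵐ[gagliardoMeasure N s Ω] g := by
    filter_upwards [ae_gagliardoMeasure_of_ae hv, hgψ] with p hp hgp
    exact tendsto_nhds_unique (hp.1.sub hp.2) hgp
  have hvS1 : ∀ᵐ x, x ∈ S1 → v x = 0 :=
    ae_mem_imp_eq_zero_of_ae_tendsto (u := fun n => u (φ (ψ n))) (fun n => (hmem _).2.1) hv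
  refine ⟨v, memE_iff.2 ⟨hvm, hvS1, hfL.ae_eq hvf.symm, hgL.ae_eq hvg.symm⟩, ?_⟩
  rw [← add_zero (0 : ℝ)]
  refine (hf.add hg).congr fun n => ?_
  congr 1 <;> refine integral_congr_ae ?_
  · filter_upwards [hvf] with x hx
    rw [hx]
  · filter_upwards [hvg] with p hp
    rw [hp]

end Gagliardo

theorem E_is_Hilbert_general
    {N : ℕ} {s : ℝ}
    {Ω S1 : Set (Rn N)} (hΩo : IsOpen Ω)
    (hΩc : IsConnected Ω) :
    -- the inner product is well defined on E^s_{Σ₁}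
    (∀ u v : Rn N → ℝ, MemE N s Ω S1 u → MemE N s Ω S1 v →
      IntegrableOn (fun x => u x * v x) Ω ∧ IntegrableOn (frKer N s u v) (Qset N Ω)) ∧
    -- positivity and definiteness (after identification of a.e. equal functions)
    (∀ u : Rn N → ℝ, MemE N s Ω S1 u →
      (0 ≤ (∫ x in Ω, u x * u x) + ∫ p in Qset N Ω, frKer N s u u p) ∧
      (((∫ x in Ω, u x * u x) + ∫ p in Qset N Ω, frKer N s u u p) = 0 →
        ∀ᵐ x : Rn N, u x = 0)) ∧
    -- completeness for the induced norm
    (∀ un : ℕ → Rn N → ℝ, (∀ n, MemE N s Ω S1 (un n)) →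
      (∀ ε : ℝ, 0 < ε → ∃ M : ℕ, ∀ m n : ℕ, M ≤ m → M ≤ n →
        (∫ x in Ω, (un m x - un n x) ^ 2) +
          (∫ p in Qset N Ω,
            frKer N s (fun z => un m z - un n z) (fun z => un m z - un n z) p) < ε) →
      ∃ u : Rn N → ℝ, MemE N s Ω S1 u ∧
        Filter.Tendsto (fun n =>
          (∫ x in Ω, (un n x - u x) ^ 2) +
            ∫ p in Qset N Ω,
              frKer N s (fun z => un n z - u z) (fun z => un n z - u z) p)
          Filter.atTop (nhds 0)) := by
  have hΩ0 : volume Ω ≠ 0 := hΩo.measure_ne_zero volume hΩc.nonempty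
  have hnonneg : ∀ u, 0 ≤ (∫ x in Ω, u x * u x) + ∫ p in Qset N Ω, frKer N s u u p := fun u =>
    add_nonneg (integral_nonneg fun _ => mul_self_nonneg _)
      (integral_nonneg fun _ => div_nonneg (mul_self_nonneg _) (by positivity))
  exact ⟨fun u v hu hv => hu.integrableOn_mul_and_integrableOn_frKer hv,
    fun u hu => ⟨hnonneg u, hu.ae_eq_zero_of_integral_add_integral_eq_zero hΩo.measurableSet hΩ0⟩,
    fun un hun hC => MemE.exists_tendsto_of_cauchy hΩo.measurableSet hΩ0 hun hC⟩

/-- E^s_{Σ₁} is a Hilbert space: the bilinear form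
⟨u,v⟩ = ∫_Ω u v + ∬_Q (u(x)-u(y))(v(x)-v(y))/|x-y|^{N+2s} is well defined on
E^s_{Σ₁}, it is positive definite (up to a.e. identification), and E^s_{Σ₁} is
complete for the induced norm. -/
theorem E_is_Hilbert
    {N : ℕ} (hN : 1 ≤ N) {s : ℝ} (hs0 : 0 < s) (hs1 : s < 1)
    {Ω S1 S2 : Set (Rn N)} (hΩo : IsOpen Ω) (hΩb : Bornology.IsBounded Ω)
    (hΩc : IsConnected Ω)
    (hS1o : IsOpen S1) (hS2o : IsOpen S2)
    (hS1m : 0 < volume S1) (hS2m : 0 < volume S2)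
    (hdisj : Disjoint S1 S2) (hcov : closure S1 ∪ closure S2 = Ωᶜ) :
    -- the inner product is well defined on E^s_{Σ₁}
    (∀ u v : Rn N → ℝ, MemE N s Ω S1 u → MemE N s Ω S1 v →
      IntegrableOn (fun x => u x * v x) Ω ∧ IntegrableOn (frKer N s u v) (Qset N Ω)) ∧
    -- positivity and definiteness (after identification of a.e. equal functions)
    (∀ u : Rn N → ℝ, MemE N s Ω S1 u →
      (0 ≤ (∫ x in Ω, u x * u x) + ∫ p in Qset N Ω, frKer N s u u p) ∧
      (((∫ x in Ω, u x * u x) + ∫ p in Qset N Ω, frKer N s u u p) = 0 →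
        ∀ᵐ x : Rn N, u x = 0)) ∧
    -- completeness for the induced norm
    (∀ un : ℕ → Rn N → ℝ, (∀ n, MemE N s Ω S1 (un n)) →
      (∀ ε : ℝ, 0 < ε → ∃ M : ℕ, ∀ m n : ℕ, M ≤ m → M ≤ n →
        (∫ x in Ω, (un m x - un n x) ^ 2) +
          (∫ p in Qset N Ω,
            frKer N s (fun z => un m z - un n z) (fun z => un m z - un n z) p) < ε) →
      ∃ u : Rn N → ℝ, MemE N s Ω S1 u ∧
        Filter.Tendsto (fun n =>
          (∫ x in Ω, (un n x - u x) ^ 2) +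
            ∫ p in Qset N Ω,
              frKer N s (fun z => un n z - u z) (fun z => un n z - u z) p)
          Filter.atTop (nhds 0)) :=
  E_is_Hilbert_general hΩo hΩc
end
end

section
/- The Gagliardo-type seminorm over Q is a norm on E^s_{Σ1}: if u ∈ E^s_{Σ1} satisfies ∬_Q |u(x) − u(y)|² / |x − y|^{N+2s} dx dy = 0, then u = 0 a.e. in ℝ^N. -/
open MeasureTheory Set

noncomputable section

/-- The Gagliardo seminorm over Q is a norm on E^s_{Σ₁}: if it vanishes,
the function vanishes a.e. in ℝ^N. -/
theorem gagliardo_seminorm_is_norm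
    {N : ℕ} (hN : 1 ≤ N) {s : ℝ} (hs0 : 0 < s) (hs1 : s < 1)
    {Ω S1 S2 : Set (Rn N)} (hΩo : IsOpen Ω) (hΩb : Bornology.IsBounded Ω)
    (hΩc : IsConnected Ω)
    (hS1o : IsOpen S1) (hS2o : IsOpen S2)
    (hS1m : 0 < volume S1) (hS2m : 0 < volume S2)
    (hdisj : Disjoint S1 S2) (hcov : closure S1 ∪ closure S2 = Ωᶜ) :
    ∀ u : Rn N → ℝ, MemE N s Ω S1 u →
      (∫ p in Qset N Ω, frKer N s u u p) = 0 →
      ∀ᵐ x : Rn N, u x = 0 := by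
  intro u hu hint
  obtain ⟨humeas, hS1, hL2, hInt⟩ := hu
  have hQm : MeasurableSet (Qset N Ω) :=
    MeasurableSet.univ.diff ((hΩo.measurableSet.compl).prod hΩo.measurableSet.compl)
  have hnn : ∀ p, 0 ≤ frKer N s u u p := fun p =>
    div_nonneg (mul_self_nonneg _) (Real.rpow_nonneg (norm_nonneg _) _)
  have hzero : ∀ᵐ p : Rn N × Rn N, p ∈ Qset N Ω → frKer N s u u p = 0 := by
    have h := (integral_eq_zero_iff_of_nonneg hnn hInt).mp hint
    rwa [Filter.EventuallyEq, ae_restrict_iff' hQm] at h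
  have key : ∀ᵐ p : Rn N × Rn N, (p.1 ∈ Ω ∨ p.2 ∈ Ω) → u p.1 = u p.2 := by
    filter_upwards [hzero] with p hp hmem
    have hpQ : p ∈ Qset N Ω := by
      simp only [Qset, Set.mem_diff, Set.mem_univ, true_and, Set.mem_prod,
        Set.mem_compl_iff, not_and_or, not_not]
      tauto
    have h0 := hp hpQ
    by_cases hxy : p.1 = p.2
    · rw [hxy]
    · have hb : (0:ℝ) < ‖p.1 - p.2‖ ^ ((N:ℝ) + 2*s) :=
        Real.rpow_pos_of_pos (norm_pos_iff.mpr (sub_ne_zero.mpr hxy)) _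
      unfold frKer at h0
      rcases div_eq_zero_iff.mp h0 with hnum | hden
      · exact sub_eq_zero.mp (mul_self_eq_zero.mp hnum)
      · exact absurd hden hb.ne'
  have key' : ∀ᵐ p : Rn N × Rn N ∂((volume : Measure (Rn N)).prod volume),
      (p.1 ∈ Ω ∨ p.2 ∈ Ω) → u p.1 = u p.2 := by
    rwa [← Measure.volume_eq_prod]
  have key2 := Measure.ae_ae_of_ae_prod key'
  have uΩ : ∀ᵐ x : Rn N, x ∈ Ω → u x = 0 := by
    have hS1ne : volume S1 ≠ 0 := hS1m.ne'
    filter_upwards [key2] with x hx hxΩ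
    have hfreq : ∃ᵐ y ∂(volume : Measure (Rn N)), y ∈ S1 :=
      frequently_ae_mem_iff.mpr hS1ne
    obtain ⟨y, hyS1, hxy, hy0⟩ := (hfreq.and_eventually (hx.and hS1)).exists
    rw [hxy (Or.inl hxΩ), hy0 hyS1]
  have hΩne : volume Ω ≠ 0 := (hΩo.measure_pos volume hΩc.nonempty).ne'
  filter_upwards [key2] with x hx
  have hfreq : ∃ᵐ y ∂(volume : Measure (Rn N)), y ∈ Ω :=
    frequently_ae_mem_iff.mpr hΩne
  obtain ⟨y, hyΩ, hxy, hy0⟩ := (hfreq.and_eventually (hx.and uΩ)).exists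
  rw [hxy (Or.inr hyΩ), hy0 hyΩ]
end
end

section
/- Let u, v : ℝ^N → ℝ be functions with u ≥ 0 and v ≥ 0, let ε > 0 and k ≥ 0, and define φ_ε(x) := max( v(x)/(u(x) + ε) − k, 0 ). Then for all x, y ∈ ℝ^N: (u(x) + ε)(u(y) + ε)(φ_ε(x) − φ_ε(y))² ≤ [ u(y)(v(x) − v(y)) − v(y)(u(x) − u(y)) ](φ_ε(x) − φ_ε(y)) + ε (v(x) − v(y))(φ_ε(x) − φ_ε(y)). -/
noncomputable section

/-! Truncation `t ↦ max t c` is monotone and 1-Lipschitz, so `Δφ := φ x - φ y` has the sign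
of `Δp := p x - p y` for `p := v / (u + ε) - k` and is no larger in absolute value; hence
`Δφ ^ 2 ≤ Δp * Δφ`. Multiplying by `(u x + ε) (u y + ε) > 0` clears the denominators
of `Δp`. -/

section LinearOrderedField

variable {α : Type*} [Field α] [LinearOrder α] [IsStrictOrderedRing α]

lemma sq_le_mul_of_abs_le_of_mul_nonneg {a b : α} (hab : |a| ≤ |b|) (h : 0 ≤ a * b) :
    a ^ 2 ≤ b * a :=
  calc a ^ 2 = |a| * |a| := by rw [sq, abs_mul_abs_self]
    _ ≤ |a| * |b| := mul_le_mul_of_nonneg_left hab (abs_nonneg a)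
    _ = b * a := by rw [← abs_mul, abs_of_nonneg h, mul_comm]

lemma max_sub_max_sq_le (p q c : α) :
    (max p c - max q c) ^ 2 ≤ (p - q) * (max p c - max q c) :=
  sq_le_mul_of_abs_le_of_mul_nonneg (abs_max_sub_max_le_abs p q c)
    (((monotone_id.max (monotone_const (c := c))).monovary monotone_id).sub_mul_sub_nonneg q p)

end LinearOrderedField

theorem truncation_pointwise_inequality_general
    {N : ℕ} (u v : Rn N → ℝ)
    (hu : ∀ x, 0 ≤ u x)
    (ε k : ℝ) (hε : 0 < ε)
    (φ : Rn N → ℝ) (hφ : ∀ x, φ x = max (v x / (u x + ε) - k) 0) :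
    ∀ x y : Rn N,
      (u x + ε) * (u y + ε) * (φ x - φ y) ^ 2 ≤
        (u y * (v x - v y) - v y * (u x - u y)) * (φ x - φ y) +
          ε * (v x - v y) * (φ x - φ y) := by
  intro x y
  have hx : 0 < u x + ε := by linarith [hu x]
  have hy : 0 < u y + ε := by linarith [hu y]
  have key := max_sub_max_sq_le (v x / (u x + ε) - k) (v y / (u y + ε) - k) 0
  rw [← hφ x, ← hφ y] at key
  calc (u x + ε) * (u y + ε) * (φ x - φ y) ^ 2
      ≤ (u x + ε) * (u y + ε) *
          ((v x / (u x + ε) - k - (v y / (u y + ε) - k)) * (φ x - φ y)) :=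
        mul_le_mul_of_nonneg_left key (by positivity)
    _ = (u y * (v x - v y) - v y * (u x - u y)) * (φ x - φ y) +
          ε * (v x - v y) * (φ x - φ y) := by
        field_simp
        ring

/-- The pointwise inequality satisfied by the truncation
φ_ε = (v/(u+ε) - k)_+ of the quotient of two nonnegative functions. -/
theorem truncation_pointwise_inequality
    {N : ℕ} (hN : 1 ≤ N) (u v : Rn N → ℝ)
    (hu : ∀ x, 0 ≤ u x) (hv : ∀ x, 0 ≤ v x)
    (ε k : ℝ) (hε : 0 < ε) (hk : 0 ≤ k)
    (φ : Rn N → ℝ) (hφ : ∀ x, φ x = max (v x / (u x + ε) - k) 0) :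
    ∀ x y : Rn N,
      (u x + ε) * (u y + ε) * (φ x - φ y) ^ 2 ≤
        (u y * (v x - v y) - v y * (u x - u y)) * (φ x - φ y) +
          ε * (v x - v y) * (φ x - φ y) :=
  truncation_pointwise_inequality_general u v hu ε k hε φ hφ
end
end
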